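/- arXiv:2509.25408 — 5 statements merged into one kernel-verified Lean document; each statement's English description precedes it below -/
import Mathlib

section
/- If 0 < a < b, then τ*(a,b) = √((b−a)/(a·b)) is a critical point of the expected loss L(τ) = (V/2)(1−(a/2)τ²)(1−(b/2)τ²) + V(a/2)τ², i.e., L'(τ*) = 0, and the second derivative satisfies L''(τ*) > 0 for any V > 0. -/
/-!
Expanding the product, `L τ = V/2 + p τ² + q τ⁴` with `p = V(a - b)/4 < 0` and `q = V a b/8 > 0`.
For such an even quartic, `L' τ = 2τ (p + 2q τ²)` vanishes where `2q τ² = -p`, which is exactly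
`τ² = (b - a)/(a b)`, and there `L'' τ = 2p + 12 q τ² = -4p = V (b - a) > 0`.
-/

namespace EvenQuartic

variable (c p q : ℝ)

theorem hasDerivAt (τ : ℝ) :
    HasDerivAt (fun τ => c + p * τ ^ 2 + q * τ ^ 4) (2 * p * τ + 4 * q * τ ^ 3) τ := by
  refine ((((hasDerivAt_pow 2 τ).const_mul p).const_add c).add
    ((hasDerivAt_pow 4 τ).const_mul q)).congr_deriv ?_
  push_cast
  ring

theorem deriv_eq :
    deriv (fun τ => c + p * τ ^ 2 + q * τ ^ 4) = fun τ => 2 * p * τ + 4 * q * τ ^ 3 :=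
  funext fun τ => (hasDerivAt c p q τ).deriv

theorem deriv_deriv_eq (τ : ℝ) :
    deriv (deriv (fun τ => c + p * τ ^ 2 + q * τ ^ 4)) τ = 2 * p + 12 * q * τ ^ 2 := by
  rw [deriv_eq]
  refine HasDerivAt.deriv ?_
  refine (((hasDerivAt_id' τ).const_mul (2 * p)).add
    ((hasDerivAt_pow 3 τ).const_mul (4 * q))).congr_deriv ?_
  push_cast
  ring

variable {c p q}

theorem deriv_eq_zero_of_critical {τ : ℝ} (hτ : 2 * q * τ ^ 2 = -p) :
    deriv (fun τ => c + p * τ ^ 2 + q * τ ^ 4) τ = 0 := by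
  rw [deriv_eq]
  linear_combination 2 * τ * hτ

theorem deriv_deriv_eq_of_critical {τ : ℝ} (hτ : 2 * q * τ ^ 2 = -p) :
    deriv (deriv (fun τ => c + p * τ ^ 2 + q * τ ^ 4)) τ = -4 * p := by
  rw [deriv_deriv_eq]
  linear_combination 6 * hτ

end EvenQuartic

theorem stmt_1 (a b V : ℝ) (ha : 0 < a) (hab : a < b) (hV : 0 < V)
    (L : ℝ → ℝ)
    (hL : L = fun τ => (V / 2) * ((1 - (a / 2) * τ^2) * (1 - (b / 2) * τ^2)) +
      V * (a / 2) * τ^2) :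
    deriv L (Real.sqrt ((b - a) / (a * b))) = 0 ∧
    0 < deriv (deriv L) (Real.sqrt ((b - a) / (a * b))) := by
  have hb : 0 < b := ha.trans hab
  have hL_quartic : L = fun τ => V / 2 + V * (a - b) / 4 * τ ^ 2 + V * a * b / 8 * τ ^ 4 := by
    rw [hL]
    funext τ
    ring
  have hcritical :
      2 * (V * a * b / 8) * Real.sqrt ((b - a) / (a * b)) ^ 2 = -(V * (a - b) / 4) := by
    rw [Real.sq_sqrt (div_nonneg (sub_nonneg.mpr hab.le) (mul_pos ha hb).le)]
    field_simp
    ring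
  rw [hL_quartic, EvenQuartic.deriv_deriv_eq_of_critical hcritical]
  refine ⟨EvenQuartic.deriv_eq_zero_of_critical hcritical, ?_⟩
  linarith [mul_pos hV (sub_pos.mpr hab)]
end

section
/- If 0 < a < b and 0 < Y ≤ Z, then τᵢ = √((b + a(1 − 2Y/Z))/(a·b)) is a real number (the radicand is positive) and satisfies the stage first-order condition (Z/2)(−aτᵢ(1−(b/2)τᵢ²) − bτᵢ(1−(a/2)τᵢ²)) + Y·a·τᵢ = 0. -/
theorem stmt_5 (a b Y Z : ℝ) (ha : 0 < a) (hab : a < b) (hY : 0 < Y) (hYZ : Y ≤ Z) :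
    0 < (b + a * (1 - 2 * Y / Z)) / (a * b) ∧
    (Z / 2) * (-a * Real.sqrt ((b + a * (1 - 2 * Y / Z)) / (a * b)) *
          (1 - (b / 2) * (Real.sqrt ((b + a * (1 - 2 * Y / Z)) / (a * b)))^2)
        - b * Real.sqrt ((b + a * (1 - 2 * Y / Z)) / (a * b)) *
          (1 - (a / 2) * (Real.sqrt ((b + a * (1 - 2 * Y / Z)) / (a * b)))^2))
      + Y * a * Real.sqrt ((b + a * (1 - 2 * Y / Z)) / (a * b)) = 0 := by
  have hZ : 0 < Z := lt_of_lt_of_le hY hYZ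
  have hnum : 0 < b + a * (1 - 2 * Y / Z) := by
    have h1 : 2 * Y / Z ≤ 2 := by
      rw [div_le_iff₀ hZ]; linarith
    nlinarith
  have hr : 0 < (b + a * (1 - 2 * Y / Z)) / (a * b) :=
    div_pos hnum (mul_pos ha (ha.trans hab))
  refine ⟨hr, ?_⟩
  set s := Real.sqrt ((b + a * (1 - 2 * Y / Z)) / (a * b)) with hs
  have hs2 : s ^ 2 = (b + a * (1 - 2 * Y / Z)) / (a * b) :=
    Real.sq_sqrt hr.le
  have hr2 : Z * (a * b * s ^ 2) = Z * (b + a) - 2 * a * Y := by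
    have hb : (0:ℝ) < b := ha.trans hab
    rw [hs2]; field_simp; ring
  linarith [mul_self_nonneg s, (by linear_combination (s / 2) * hr2 :
    (Z / 2) * (-a * s * (1 - (b / 2) * s ^ 2) - b * s * (1 - (a / 2) * s ^ 2))
      + Y * a * s = 0)]
end

section
/- Let λ, γ > 0 and 0 ≤ T₀ < T₁ < T₂. Define Y₁ = ∫_{T₀}^{T₁} e^{−λt} dt, Z₁ = ∫_{T₀}^{T₁} e^{−λt}e^{−γt} dt, Y₂ = ∫_{T₁}^{T₂} e^{−λt} dt, Z₂ = ∫_{T₁}^{T₂} e^{−λt}e^{−γt} dt. Then Y₁/Z₁ < Y₂/Z₂. -/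
theorem stmt_7 (lam gam T₀ T₁ T₂ : ℝ) (hlam : 0 < lam) (hgam : 0 < gam)
    (hT0 : 0 ≤ T₀) (h01 : T₀ < T₁) (h12 : T₁ < T₂) :
    (∫ t in T₀..T₁, Real.exp (-lam * t)) /
      (∫ t in T₀..T₁, Real.exp (-lam * t) * Real.exp (-gam * t)) <
    (∫ t in T₁..T₂, Real.exp (-lam * t)) /
      (∫ t in T₁..T₂, Real.exp (-lam * t) * Real.exp (-gam * t)) := by
  set C := Real.exp (-gam * T₁) with hC
  have hCpos : 0 < C := Real.exp_pos _
  set Y₁ := ∫ t in T₀..T₁, Real.exp (-lam * t) with hY₁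
  set Z₁ := ∫ t in T₀..T₁, Real.exp (-lam * t) * Real.exp (-gam * t) with hZ₁
  set Y₂ := ∫ t in T₁..T₂, Real.exp (-lam * t) with hY₂
  set Z₂ := ∫ t in T₁..T₂, Real.exp (-lam * t) * Real.exp (-gam * t) with hZ₂
  have cont1 : Continuous fun t : ℝ => Real.exp (-lam * t) := by continuity
  have cont2 : Continuous fun t : ℝ => Real.exp (-lam * t) * Real.exp (-gam * t) := by
    continuity
  have cont3 : Continuous fun t : ℝ => C * Real.exp (-lam * t) := by continuity
  have hY1pos : 0 < Y₁ :=
    intervalIntegral.intervalIntegral_pos_of_pos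
      (cont1.intervalIntegrable _ _) (fun x => Real.exp_pos _) h01
  have hY2pos : 0 < Y₂ :=
    intervalIntegral.intervalIntegral_pos_of_pos
      (cont1.intervalIntegrable _ _) (fun x => Real.exp_pos _) h12
  have hZ1pos : 0 < Z₁ :=
    intervalIntegral.intervalIntegral_pos_of_pos
      (cont2.intervalIntegrable _ _)
      (fun x => mul_pos (Real.exp_pos _) (Real.exp_pos _)) h01
  have hZ2pos : 0 < Z₂ :=
    intervalIntegral.intervalIntegral_pos_of_pos
      (cont2.intervalIntegrable _ _)
      (fun x => mul_pos (Real.exp_pos _) (Real.exp_pos _)) h12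
  -- Z₁ > C * Y₁
  have key1 : C * Y₁ < Z₁ := by
    have h : (∫ t in T₀..T₁, C * Real.exp (-lam * t)) <
        ∫ t in T₀..T₁, Real.exp (-lam * t) * Real.exp (-gam * t) := by
      apply intervalIntegral.integral_lt_integral_of_continuousOn_of_le_of_exists_lt h01
        cont3.continuousOn cont2.continuousOn
      · intro x hx
        have : C ≤ Real.exp (-gam * x) := by
          apply Real.exp_le_exp.mpr
          nlinarith [hx.2]
        nlinarith [Real.exp_pos (-lam * x)]
      · refine ⟨T₀, ⟨le_refl _, h01.le⟩, ?_⟩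
        have : C < Real.exp (-gam * T₀) := by
          apply Real.exp_lt_exp.mpr
          nlinarith
        nlinarith [Real.exp_pos (-lam * T₀)]
    rwa [intervalIntegral.integral_const_mul] at h
  -- Z₂ < C * Y₂
  have key2 : Z₂ < C * Y₂ := by
    have h : (∫ t in T₁..T₂, Real.exp (-lam * t) * Real.exp (-gam * t)) <
        ∫ t in T₁..T₂, C * Real.exp (-lam * t) := by
      apply intervalIntegral.integral_lt_integral_of_continuousOn_of_le_of_exists_lt h12
        cont2.continuousOn cont3.continuousOn
      · intro x hx
        have : Real.exp (-gam * x) ≤ C := by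
          apply Real.exp_le_exp.mpr
          nlinarith [hx.1]
        nlinarith [Real.exp_pos (-lam * x)]
      · refine ⟨T₂, ⟨h12.le, le_refl _⟩, ?_⟩
        have : Real.exp (-gam * T₂) < C := by
          apply Real.exp_lt_exp.mpr
          nlinarith
        nlinarith [Real.exp_pos (-lam * T₂)]
    rwa [intervalIntegral.integral_const_mul] at h
  rw [div_lt_div_iff₀ hZ1pos hZ2pos]
  nlinarith
end

section
/- For λ, γ > 0 and 0 ≤ T₀ < T₁ < T₂, the inequality (e^{−λT₀} − e^{−λT₁})·(e^{−(λ+γ)T₁} − e^{−(λ+γ)T₂}) < (e^{−λT₁} − e^{−λT₂})·(e^{−(λ+γ)T₀} − e^{−(λ+γ)T₁}) holds. -/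
theorem stmt_9 (lam gam T₀ T₁ T₂ : ℝ) (hlam : 0 < lam) (hgam : 0 < gam)
    (hT0 : 0 ≤ T₀) (h01 : T₀ < T₁) (h12 : T₁ < T₂) :
    (Real.exp (-lam * T₀) - Real.exp (-lam * T₁)) *
      (Real.exp (-(lam + gam) * T₁) - Real.exp (-(lam + gam) * T₂)) <
    (Real.exp (-lam * T₁) - Real.exp (-lam * T₂)) *
      (Real.exp (-(lam + gam) * T₀) - Real.exp (-(lam + gam) * T₁)) := by
  have hr : 0 < T₁ - T₀ := by linarith
  have hs : 0 < T₂ - T₁ := by linarith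
  set r := T₁ - T₀ with hrdef
  set s := T₂ - T₁ with hsdef
  set u := Real.exp (-lam * T₀) with hu
  set U := Real.exp (-(gam * T₀)) with hU
  set p := Real.exp (-(lam * r)) with hp
  set q := Real.exp (-(lam * s)) with hq
  set P := Real.exp (-(gam * r)) with hP
  set Q := Real.exp (-(gam * s)) with hQ
  have hup : 0 < u := Real.exp_pos _
  have hUp : 0 < U := Real.exp_pos _
  have hpp : 0 < p := Real.exp_pos _
  have hqp : 0 < q := Real.exp_pos _
  have hPp : 0 < P := Real.exp_pos _
  have hQp : 0 < Q := Real.exp_pos _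
  have E1 : Real.exp (-lam * T₁) = u * p := by
    rw [hu, hp, ← Real.exp_add]; congr 1; rw [hrdef]; ring
  have E2 : Real.exp (-lam * T₂) = u * p * q := by
    rw [hu, hp, hq, ← Real.exp_add, ← Real.exp_add]; congr 1
    rw [hrdef, hsdef]; ring
  have E3 : Real.exp (-(lam + gam) * T₀) = u * U := by
    rw [hu, hU, ← Real.exp_add]; congr 1; ring
  have E4 : Real.exp (-(lam + gam) * T₁) = u * p * U * P := by
    rw [hu, hp, hU, hP, ← Real.exp_add, ← Real.exp_add, ← Real.exp_add]; congr 1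
    rw [hrdef]; ring
  have E5 : Real.exp (-(lam + gam) * T₂) = u * p * q * U * P * Q := by
    rw [hu, hp, hq, hU, hP, hQ, ← Real.exp_add, ← Real.exp_add, ← Real.exp_add,
      ← Real.exp_add, ← Real.exp_add]
    congr 1; rw [hrdef, hsdef]; ring
  rw [E1, E2, E3, E4, E5]
  clear_value u U p q P Q
  -- key bounds
  have A1 : gam * r * P < 1 - P := by
    have h := Real.add_one_lt_exp (x := gam * r) (ne_of_gt (mul_pos hgam hr))
    have h2 : P * Real.exp (gam * r) = 1 := by
      rw [hP, ← Real.exp_add]; simp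
    nlinarith [hPp]
  have A2 : lam * s * q < 1 - q := by
    have h := Real.add_one_lt_exp (x := lam * s) (ne_of_gt (mul_pos hlam hs))
    have h2 : q * Real.exp (lam * s) = 1 := by
      rw [hq, ← Real.exp_add]; simp
    nlinarith [hqp]
  have A3 : 1 - p < lam * r := by
    have h := Real.add_one_lt_exp (x := -(lam * r))
      (neg_ne_zero.mpr (ne_of_gt (mul_pos hlam hr)))
    rw [← hp] at h; linarith
  have A4 : 1 - Q < gam * s := by
    have h := Real.add_one_lt_exp (x := -(gam * s))
      (neg_ne_zero.mpr (ne_of_gt (mul_pos hgam hs)))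
    rw [← hQ] at h; linarith
  have hp1 : p < 1 := by
    rw [hp]; exact Real.exp_lt_one_iff.mpr (by linarith [mul_pos hlam hr])
  have hQ1 : Q < 1 := by
    rw [hQ]; exact Real.exp_lt_one_iff.mpr (by linarith [mul_pos hgam hs])
  have C1 : (lam * s * q) * (gam * r * P) < (1 - q) * (1 - P) := by
    apply mul_lt_mul'' A2 A1 <;> positivity
  have C2 : (q * (1 - p)) * (P * (1 - Q)) < (q * (lam * r)) * (P * (gam * s)) := by
    apply mul_lt_mul''
    · exact mul_lt_mul_of_pos_left A3 hqp
    · exact mul_lt_mul_of_pos_left A4 hPp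
    · exact mul_nonneg hqp.le (by linarith)
    · exact mul_nonneg hPp.le (by linarith)
  have key : P * (1 - p) * (1 - q * Q) < (1 - q) * (1 - p * P) := by nlinarith [C1, C2]
  have hpos : 0 < u * u * p * U := by positivity
  have h2 := mul_lt_mul_of_pos_left key hpos
  have eqL : (u - u * p) * (u * p * U * P - u * p * q * U * P * Q)
      = u * u * p * U * (P * (1 - p) * (1 - q * Q)) := by ring
  have eqR : (u * p - u * p * q) * (u * U - u * p * U * P)
      = u * u * p * U * ((1 - q) * (1 - p * P)) := by ring
  rw [eqL, eqR]
  exact h2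
end

section
/- Fix 0 < a < b and thresholds 0 < τ₂ < τ₁ with q(τ₂) > q(τ₁) where q(τ) = 1 − (b/2)τ². Define f(a) = p(τ₁)q(τ₁) − p(τ₂)q(τ₂) with p(τ) = 1 − (a/2)τ², and assume f(a) < 0. Then a·(∂f/∂a) − f(a) > 0, where ∂f/∂a = (1/2)τ₂²·q(τ₂) − (1/2)τ₁²·q(τ₁). Consequently ∂T*/∂a = (1/γ)·(a·f'(a) − f(a))/(a·f(a)) < 0. -/
theorem stmt_13 (a b τ₁ τ₂ gam : ℝ) (ha : 0 < a) (hab : a < b) (hgam : 0 < gam)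
    (hτ₂ : 0 < τ₂) (hτ : τ₂ < τ₁)
    (p q : ℝ → ℝ)
    (hp : p = fun τ => 1 - (a / 2) * τ^2) (hq : q = fun τ => 1 - (b / 2) * τ^2)
    (hqmono : q τ₁ < q τ₂)
    (f f' : ℝ)
    (hf : f = p τ₁ * q τ₁ - p τ₂ * q τ₂)
    (hf' : f' = (1 / 2) * τ₂^2 * q τ₂ - (1 / 2) * τ₁^2 * q τ₁)
    (hfneg : f < 0) :
    a * f' - f > 0 ∧ (1 / gam) * ((a * f' - f) / (a * f)) < 0 := by
  have key : a * f' - f = q τ₂ - q τ₁ := by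
    subst hp hq hf hf'; ring
  have h1 : a * f' - f > 0 := by rw [key]; linarith
  refine ⟨h1, ?_⟩
  have hden : a * f < 0 := mul_neg_of_pos_of_neg ha hfneg
  have : (a * f' - f) / (a * f) < 0 := div_neg_of_pos_of_neg h1 hden
  exact mul_neg_of_pos_of_neg (by positivity) this
end
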